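/- arXiv:2003.11773 — 2 statements merged into one kernel-verified Lean document; each statement's English description precedes it below -/
import Mathlib

section
/- Let m, p, q be positive integers with gcd(p, q) = 1, and set N = m·p·q. Let h be a generator of the cyclic group ℤ/Nℤ. Then for any elements a, b of ℤ/Nℤ of orders p and q respectively, there exists a group automorphism η of ℤ/Nℤ such that η(a) = (m·q)·h and η(b) = (m·p)·h. -/
/-!
Elements of `ZMod N` of the same order differ by a unit factor, so one automorphism sends `a + b`,
of order `p * q`, to `(m * q) • h + (m * p) • h`, which has the same order. Since `p` and `q` are
coprime, a sum of a `p`-torsion and a `q`-torsion element determines both summands, so this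
automorphism sends `a` to `(m * q) • h` and `b` to `(m * p) • h`.
-/

theorem eq_zero_of_nsmul_eq_zero_of_coprime {G : Type*} [AddMonoid G] {p q : ℕ}
    (hpq : p.Coprime q) {z : G} (hp : p • z = 0) (hq : q • z = 0) : z = 0 :=
  AddMonoid.addOrderOf_eq_one_iff.mp <| Nat.eq_one_of_dvd_coprimes hpq
    (addOrderOf_dvd_of_nsmul_eq_zero hp) (addOrderOf_dvd_of_nsmul_eq_zero hq)

theorem eq_and_eq_of_add_eq_add_of_coprime {G : Type*} [AddCommGroup G] {p q : ℕ}
    (hpq : p.Coprime q) {x x' y y' : G} (hx : p • x = 0) (hx' : p • x' = 0)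
    (hy : q • y = 0) (hy' : q • y' = 0) (h : x + y = x' + y') : x = x' ∧ y = y' := by
  have hdiff : x - x' = y' - y := by rw [sub_eq_sub_iff_add_eq_add, h, add_comm]
  have hzero : x - x' = 0 := eq_zero_of_nsmul_eq_zero_of_coprime hpq
    (by rw [nsmul_sub, hx, hx', sub_zero]) (by rw [hdiff, nsmul_sub, hy, hy', sub_zero])
  rw [hzero, eq_comm, sub_eq_zero] at hdiff
  exact ⟨sub_eq_zero.mp hzero, hdiff.symm⟩

theorem addOrderOf_nsmul_of_addOrderOf_eq_mul {G : Type*} [AddMonoid G] {x : G} {k n : ℕ}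
    (hk : k ≠ 0) (hx : addOrderOf x = k * n) : addOrderOf (k • x) = n := by
  rw [addOrderOf_nsmul_of_dvd hk (Dvd.intro n hx.symm), hx,
    Nat.mul_div_cancel_left n (Nat.pos_of_ne_zero hk)]

theorem addOrderOf_units_mul {R : Type*} [Semiring R] (u : Rˣ) (x : R) :
    addOrderOf ((u : R) * x) = addOrderOf x :=
  (AddAut.mulLeft u).addOrderOf_eq x

namespace ZMod

theorem addOrderOf_natCast_of_dvd {N d : ℕ} [NeZero N] (hd : d ∣ N) :
    addOrderOf (d : ZMod N) = N / d := by
  have hd0 : d ≠ 0 := by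
    rintro rfl
    exact NeZero.ne N (zero_dvd_iff.mp hd)
  rw [addOrderOf_coe' N hd0, Nat.gcd_eq_right hd]

theorem exists_addEquiv_apply_eq_of_addOrderOf_eq {N : ℕ} [NeZero N] {x y : ZMod N}
    (hxy : addOrderOf x = addOrderOf y) : ∃ η : ZMod N ≃+ ZMod N, η x = y := by
  obtain ⟨d, hd, _, ⟨u, rfl⟩, rfl⟩ := eq_unit_mul_divisor x
  obtain ⟨e, he, _, ⟨v, rfl⟩, rfl⟩ := eq_unit_mul_divisor y
  have hde : d = e := by
    rw [addOrderOf_units_mul, addOrderOf_units_mul, addOrderOf_natCast_of_dvd hd,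
      addOrderOf_natCast_of_dvd he] at hxy
    exact (Nat.div_eq_iff_eq_of_dvd_dvd (NeZero.ne N) hd he).mp hxy
  refine ⟨DistribMulAction.toAddEquiv _ (v * u⁻¹), ?_⟩
  rw [DistribMulAction.toAddEquiv_apply, Units.smul_def, smul_eq_mul, hde, Units.val_mul,
    mul_assoc, u.inv_mul_cancel_left]

end ZMod

/-- Let `m, p, q` be positive integers with `gcd(p, q) = 1`, and set
`N = m * p * q`. Let `h` be a generator of `ℤ/Nℤ`. Then for any elements `a, b` of `ℤ/Nℤ`
of orders `p` and `q` respectively, there exists a group automorphism `η` of `ℤ/Nℤ` such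
that `η a = (m * q) • h` and `η b = (m * p) • h`. -/
theorem cyclic_automorphism_normalization
    (m p q : ℕ) (hm : 0 < m) (hp : 0 < p) (hq : 0 < q) (hpq : Nat.gcd p q = 1)
    (N : ℕ) (hN : N = m * p * q)
    (h : ZMod N) (hh : addOrderOf h = N)
    (a b : ZMod N) (ha : addOrderOf a = p) (hb : addOrderOf b = q) :
    ∃ η : ZMod N ≃+ ZMod N, η a = (m * q) • h ∧ η b = (m * p) • h := by
  have : NeZero N := ⟨by rw [hN]; positivity⟩
  have hpq : p.Coprime q := hpq
  have hA : addOrderOf ((m * q) • h) = p :=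
    addOrderOf_nsmul_of_addOrderOf_eq_mul (by positivity) (by rw [hh, hN]; ring)
  have hB : addOrderOf ((m * p) • h) = q :=
    addOrderOf_nsmul_of_addOrderOf_eq_mul (by positivity) (by rw [hh, hN])
  obtain ⟨η, hη⟩ := ZMod.exists_addEquiv_apply_eq_of_addOrderOf_eq
    (x := a + b) (y := (m * q) • h + (m * p) • h) (by
      rw [(AddCommute.all _ _).addOrderOf_add_eq_mul_addOrderOf_of_coprime (by rwa [ha, hb]),
        (AddCommute.all _ _).addOrderOf_add_eq_mul_addOrderOf_of_coprime (by rwa [hA, hB]),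
        ha, hb, hA, hB])
  have nsmul_eq_zero : ∀ {x : ZMod N} {n : ℕ}, addOrderOf x = n → n • x = 0 :=
    fun hx => hx ▸ addOrderOf_nsmul_eq_zero _
  exact ⟨η, eq_and_eq_of_add_eq_add_of_coprime hpq
    (nsmul_eq_zero ((η.addOrderOf_eq a).trans ha)) (nsmul_eq_zero hA)
    (nsmul_eq_zero ((η.addOrderOf_eq b).trans hb)) (nsmul_eq_zero hB)
    (by rw [← map_add, hη])⟩
end

section
/- Let p be a positive integer and let q₁, q₂, r be integers such that gcd(p, q₁) = 1, gcd(p, q₂) = 1, and q₁·q₂ ≡ r² (mod p). Then there exist integers a₁, b₁, a₂, b₂, m, n such that gcd(a₁, b₁) = 1, gcd(a₂, b₂) = 1, gcd(a₁, a₂) = 1, a₁·b₂ + a₂·b₁ = p, a₁·a₂ ≡ q₂ (mod p), m·a₁ − n·b₁ = 1, and m·a₂ + n·b₂ ≡ q₁ (mod p). -/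
/-!
Since `r² ≡ q₁ q₂` is a unit modulo `p`, `r` has an inverse `s` modulo `p`, and
`s² q₁ q₂ ≡ 1`. Put `a₁ = q₂ s` and `a₂ = a₁ q₁ + p`; then `a₁ a₂ ≡ q₂² s² q₁ ≡ q₂`, and
`a₁`, `a₂` are coprime because `a₁` is coprime to `p`. A Bézout relation `c a₁ + d a₂ = 1`
scaled by `p` gives `b₂ = c p`, `b₁ = d p` with `a₁ b₂ + a₂ b₁ = p`, which forces `aᵢ` and
`bᵢ` to be coprime. Finally, for any Bézout pair `m a₁ - n b₁ = 1`, multiplying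
`m a₂ + n b₂` by `a₁` gives `a₂ ≡ a₁ q₁` modulo `p`, and `a₁` can be cancelled.
-/

section CommRing

variable {R : Type*} [CommRing R]

theorem IsCoprime.of_dvd_sub {p x y : R} (h : IsCoprime p x) (hxy : p ∣ x - y) :
    IsCoprime p y := by
  obtain ⟨k, hk⟩ := hxy
  rw [show y = x - p * k by linear_combination -hk]
  exact IsCoprime.sub_mul_left_right_iff.mpr h

theorem IsCoprime.of_dvd_sub_sq {p q r : R} (hq : IsCoprime p q) (hr : p ∣ q - r ^ 2) :
    IsCoprime p r :=
  (IsCoprime.pow_right_iff two_pos).mp (hq.of_dvd_sub hr)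

theorem dvd_sq_mul_sub_one {p q r s : R} (hr : p ∣ q - r ^ 2) (hs : p ∣ s * r - 1) :
    p ∣ s ^ 2 * q - 1 := by
  rw [show s ^ 2 * q - 1 = s ^ 2 * (q - r ^ 2) + (s * r + 1) * (s * r - 1) by ring]
  exact dvd_add (dvd_mul_of_dvd_right hr _) (dvd_mul_of_dvd_right hs _)

theorem IsCoprime.of_mul_add_mul_eq {a₁ a₂ b₁ b₂ p : R} (hp : IsCoprime a₁ p)
    (h : a₁ * b₂ + a₂ * b₁ = p) : IsCoprime a₁ b₁ := by
  rw [← h, add_comm] at hp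
  exact hp.of_add_mul_left_right.of_mul_right_right

theorem dvd_mul_add_mul_sub_of_mul_add_mul_eq {p q a₁ a₂ b₁ b₂ m n : R}
    (hpa₁ : IsCoprime p a₁) (hsum : a₁ * b₂ + a₂ * b₁ = p) (hmn : m * a₁ - n * b₁ = 1)
    (ha₂ : p ∣ a₂ - a₁ * q) : p ∣ m * a₂ + n * b₂ - q := by
  apply hpa₁.dvd_of_dvd_mul_left
  rw [show a₁ * (m * a₂ + n * b₂ - q) = (a₂ - a₁ * q) + n * p by
    linear_combination a₂ * hmn + n * hsum]
  exact dvd_add ha₂ (dvd_mul_left p n)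

theorem exists_mul_add_mul_eq_of_isCoprime {p q a₁ a₂ : R} (hq : IsCoprime p q)
    (hpa₁ : IsCoprime p a₁) (ha₁₂ : IsCoprime a₁ a₂) (ha₂ : p ∣ a₂ - a₁ * q) :
    ∃ b₁ b₂ m n : R, IsCoprime a₁ b₁ ∧ IsCoprime a₂ b₂ ∧ a₁ * b₂ + a₂ * b₁ = p ∧
      m * a₁ - n * b₁ = 1 ∧ p ∣ m * a₂ + n * b₂ - q := by
  have hpa₂ : IsCoprime p a₂ := (hpa₁.mul_right hq).of_dvd_sub (dvd_sub_comm.mp ha₂)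
  obtain ⟨c, d, hcd⟩ := ha₁₂
  have hsum : a₁ * (c * p) + a₂ * (d * p) = p := by linear_combination p * hcd
  have hb₁ : IsCoprime a₁ (d * p) := hpa₁.symm.of_mul_add_mul_eq hsum
  have hb₂ : IsCoprime a₂ (c * p) :=
    hpa₂.symm.of_mul_add_mul_eq ((add_comm _ _).trans hsum)
  have ⟨m, n, hmn⟩ := hb₁
  have hmn' : m * a₁ - -n * (d * p) = 1 := by linear_combination hmn
  exact ⟨d * p, c * p, m, -n, hb₁, hb₂, hsum, hmn',
    dvd_mul_add_mul_sub_of_mul_add_mul_eq hpa₁ hsum hmn' ha₂⟩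

end CommRing

theorem lens_space_domination_arithmetic_general
    (p : ℤ) (q₁ q₂ r : ℤ)
    (h1 : Int.gcd p q₁ = 1) (h2 : Int.gcd p q₂ = 1)
    (h3 : p ∣ q₁ * q₂ - r ^ 2) :
    ∃ a₁ b₁ a₂ b₂ m n : ℤ,
      Int.gcd a₁ b₁ = 1 ∧ Int.gcd a₂ b₂ = 1 ∧ Int.gcd a₁ a₂ = 1 ∧
      a₁ * b₂ + a₂ * b₁ = p ∧ p ∣ a₁ * a₂ - q₂ ∧
      m * a₁ - n * b₁ = 1 ∧ p ∣ m * a₂ + n * b₂ - q₁ := by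
  simp only [← Int.isCoprime_iff_gcd_eq_one] at h1 h2 ⊢
  obtain ⟨u, s, hus⟩ := (h1.mul_right h2).of_dvd_sub_sq h3
  have hs : p ∣ s * r - 1 := ⟨-u, by linear_combination hus⟩
  have hpa₁ : IsCoprime p (q₂ * s) := h2.mul_right ⟨u, r, by linear_combination hus⟩
  have ha₁₂ : IsCoprime (q₂ * s) (q₂ * s * q₁ + p) :=
    hpa₁.symm.mul_add_left_right q₁
  have hq₂ : p ∣ q₂ * s * (q₂ * s * q₁ + p) - q₂ := by
    rw [show q₂ * s * (q₂ * s * q₁ + p) - q₂ = q₂ * (s ^ 2 * (q₁ * q₂) - 1) + q₂ * s * p by ring]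
    exact dvd_add (dvd_mul_of_dvd_right (dvd_sq_mul_sub_one h3 hs) _) (dvd_mul_left p _)
  obtain ⟨b₁, b₂, m, n, hb₁, hb₂, hsum, hmn, hq₁⟩ :=
    exists_mul_add_mul_eq_of_isCoprime h1 hpa₁ ha₁₂ ⟨1, by ring⟩
  exact ⟨_, b₁, _, b₂, m, n, hb₁, hb₂, ha₁₂, hsum, hq₂, hmn, hq₁⟩

/-- Arithmetic core of the construction showing that the lens space
`L(p, q₁)` 1-dominates `L(p, q₂)` whenever `q₁·q₂` is a square modulo `p`. -/
theorem lens_space_domination_arithmetic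
    (p : ℤ) (hp : 0 < p) (q₁ q₂ r : ℤ)
    (h1 : Int.gcd p q₁ = 1) (h2 : Int.gcd p q₂ = 1)
    (h3 : p ∣ q₁ * q₂ - r ^ 2) :
    ∃ a₁ b₁ a₂ b₂ m n : ℤ,
      Int.gcd a₁ b₁ = 1 ∧ Int.gcd a₂ b₂ = 1 ∧ Int.gcd a₁ a₂ = 1 ∧
      a₁ * b₂ + a₂ * b₁ = p ∧ p ∣ a₁ * a₂ - q₂ ∧
      m * a₁ - n * b₁ = 1 ∧ p ∣ m * a₂ + n * b₂ - q₁ :=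
  lens_space_domination_arithmetic_general p q₁ q₂ r h1 h2 h3
end
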